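/- For every ε > 0 there exists ζ > 0 with the following property: if μ and μ′ are Borel probability measures on the dyadic Cantor set 𝕂 satisfying the non-homogeneous Markov property (M) for weight sequences (p_n, q_n)_{n∈ℕ} and (p′_n, q′_n)_{n∈ℕ} respectively, and sup_{n∈ℕ} max(|p_n − p′_n|, |q_n − q′_n|) < ζ, then |h^*(μ) − h^*(μ′)| < ε (equivalently, by the paper's main theorem, the lower packing dimensions of μ and μ′ differ by less than ε). -/

import Mathlib

open MeasureTheory Filter Topology
open scoped ENNReal NNReal

noncomputable section

/-- The dyadic Cantor set `𝕂 = {0,1}^ℕ`. -/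
abbrev K : Type := ℕ → Bool

/-- The metric `d(x,y) = (1/2)^(first index where x and y differ)` on `𝕂`. -/
instance : MetricSpace K := PiNat.metricSpace

/-- The cylinder of generation `n` determined by the word `ε : Fin n → Bool`. -/
def cyl {n : ℕ} (ε : Fin n → Bool) : Set K := {x | ∀ i : Fin n, x i = ε i}

/-- The cylinder `I_n(x)` of generation `n` containing the point `x`. -/
def cylAt (x : K) (n : ℕ) : Set K := cyl (fun i : Fin n => x i)

/-- The weight attributed to a child cylinder whose parent's last letter is `e`, when the
new letter is `b`, by the non-homogeneous Markov process with weights `pq = (pₙ, qₙ)`. -/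
def weight (pq : ℝ × ℝ) (e b : Bool) : ℝ :=
  if e = false then (if b = false then pq.1 else 1 - pq.1)
  else (if b = false then pq.2 else 1 - pq.2)

/-- A Borel measure `μ` on `𝕂` satisfies the non-homogeneous Markov property (M)
for the sequences `(p n)`, `(q n)`: `μ(I₀) = p₀`, `μ(I₁) = 1 - p₀`, and the ratio
`μ(IJ)/μ(I)` for a cylinder `I ∈ ℱ_{n+1}` and a child `IJ ∈ ℱ_{n+2}` is `p (n+1)`,
`1 - p (n+1)`, `q (n+1)` or `1 - q (n+1)` according to the last letter of `I` and
the new letter of `IJ`. -/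
def MarkovMeasure (μ : Measure K) (p q : ℕ → ℝ) : Prop :=
  μ (cyl ![false]) = ENNReal.ofReal (p 0) ∧
  μ (cyl ![true]) = ENNReal.ofReal (1 - p 0) ∧
  ∀ (n : ℕ) (ε : Fin (n + 1) → Bool) (b : Bool),
    μ (cyl (Fin.snoc ε b)) =
      μ (cyl ε) * ENNReal.ofReal (weight (p (n + 1), q (n + 1)) (ε (Fin.last n)) b)

/-- `Σ_{I ∈ ℱ_n} μ(I) log μ(I)` (with the convention `0 · log 0 = 0`,
automatic since `Real.log 0 = 0`). -/
def entropySum (μ : Measure K) (n : ℕ) : ℝ :=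
  ∑ ε : Fin n → Bool, (μ (cyl ε)).toReal * Real.log (μ (cyl ε)).toReal

/-- The lower entropy `h_*(μ) = liminf (-1/(n log 2)) Σ_{I ∈ ℱ_n} μ(I) log μ(I)`. -/
def hLow (μ : Measure K) : ℝ :=
  liminf (fun n : ℕ => (-1 / (n * Real.log 2)) * entropySum μ n) atTop

/-- The upper entropy `h^*(μ) = limsup (-1/(n log 2)) Σ_{I ∈ ℱ_n} μ(I) log μ(I)`. -/
def hUpp (μ : Measure K) : ℝ :=
  limsup (fun n : ℕ => (-1 / (n * Real.log 2)) * entropySum μ n) atTop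

/-- The lower Hausdorff dimension of a measure:
`dim_*(μ) = inf {dim_H E : E ⊆ 𝕂 Borel, μ(E) > 0}`. -/
def dimLow (μ : Measure K) : ℝ≥0∞ :=
  ⨅ (E : Set K) (_ : MeasurableSet E) (_ : 0 < μ E), dimH E

/-- The upper Hausdorff dimension of a measure:
`dim^*(μ) = inf {dim_H E : E ⊆ 𝕂 Borel, μ(𝕂 ∖ E) = 0}`. -/
def dimUpp (μ : Measure K) : ℝ≥0∞ :=
  ⨅ (E : Set K) (_ : MeasurableSet E) (_ : μ Eᶜ = 0), dimH E

/-! The Markov property makes the measure of a cylinder an explicit product of transition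
probabilities, and the entropy of generation `n` telescopes into
`∑_{k<n} (m_k h(p_k) + (1 - m_k) h(q_k))`, where `h` is the binary entropy and `m_k` the mass
of the generation-`k` cylinders ending in `0`, which obeys `m_{k+1} = m_k p_k + (1 - m_k) q_k`.

Moving `p, q` by at most `ζ` changes the `k`-th term by a modulus of continuity of `h` plus
`Δ_k |h(p'_k) - h(q'_k)|` with `Δ_k = |m_k - m'_k|`. The recursion shows that `Δ` contracts by the
factor `r_k = |p'_k - q'_k|` up to an error `ζ`, so `∑_{k<n} Δ_k (1 - r_k) ≤ n ζ`; and
`|h(x) - h(y)| ≤ 3 √(1 - |x - y|)`, since `x` and `y` are both close to `{0, 1}` when `|x - y|` is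
close to `1`. By AM-GM the two bounds give an error `O(√ζ)` per generation, uniformly in `n`, so
the normalized entropies, and hence their upper limits, are uniformly close. -/

open Real Set

namespace Real

lemma negMulLog_le_two_mul_sqrt {s : ℝ} (hs : 0 ≤ s) : negMulLog s ≤ 2 * √s := by
  rcases hs.eq_or_lt with rfl | hs
  · simp
  have hlog := one_sub_inv_le_log_of_pos (sqrt_pos.2 hs)
  rw [log_sqrt hs.le] at hlog
  have hsqrt : s * (√s)⁻¹ = √s := by rw [← div_eq_mul_inv, div_sqrt]
  rw [negMulLog]
  nlinarith [mul_le_mul_of_nonneg_left hlog hs.le]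

lemma binEntropy_le_three_mul_sqrt {s : ℝ} (h0 : 0 ≤ s) (h1 : s ≤ 1) :
    binEntropy s ≤ 3 * √s := by
  have hs : s ≤ √s := by
    rw [le_sqrt h0 h0]
    nlinarith
  rw [binEntropy_eq_negMulLog_add_negMulLog_one_sub]
  linarith [negMulLog_le_two_mul_sqrt h0, negMulLog_le_one_sub_self (sub_nonneg.2 h1)]

lemma binEntropy_le_three_mul_sqrt_one_sub_abs_sub {x y : ℝ} (hx : x ∈ Icc 0 1)
    (hy : y ∈ Icc 0 1) : binEntropy x ≤ 3 * √(1 - |x - y|) := by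
  rcases le_total y x with hxy | hxy
  · rw [← binEntropy_one_sub]
    calc binEntropy (1 - x) ≤ 3 * √(1 - x) :=
          binEntropy_le_three_mul_sqrt (by linarith [hx.2]) (by linarith [hx.1])
      _ ≤ 3 * √(1 - |x - y|) := by
          gcongr
          rw [abs_of_nonneg (sub_nonneg.2 hxy)]
          linarith [hy.1]
  · calc binEntropy x ≤ 3 * √x := binEntropy_le_three_mul_sqrt hx.1 hx.2
      _ ≤ 3 * √(1 - |x - y|) := by
          gcongr
          rw [abs_of_nonpos (sub_nonpos.2 hxy)]
          linarith [hy.2]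

lemma abs_binEntropy_sub_le {x y : ℝ} (hx : x ∈ Icc 0 1) (hy : y ∈ Icc 0 1) :
    |binEntropy x - binEntropy y| ≤ 3 * √(1 - |x - y|) := by
  have hxy := binEntropy_le_three_mul_sqrt_one_sub_abs_sub hx hy
  have hyx := binEntropy_le_three_mul_sqrt_one_sub_abs_sub hy hx
  rw [abs_sub_comm y] at hyx
  rw [abs_sub_le_iff]
  constructor <;> linarith [binEntropy_nonneg hx.1 hx.2, binEntropy_nonneg hy.1 hy.2]

end Real

lemma mul_sqrt_le_half_div_add {d s t : ℝ} (hd0 : 0 ≤ d) (hd1 : d ≤ 1) (hs : 0 ≤ s)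
    (ht : 0 < t) : d * √s ≤ (d * s / t + t) / 2 := by
  obtain ⟨u, hu, rfl⟩ : ∃ u, 0 ≤ u ∧ s = u ^ 2 := ⟨√s, sqrt_nonneg s, (sq_sqrt hs).symm⟩
  rw [sqrt_sq hu, div_add' _ _ _ ht.ne', div_div, le_div_iff₀ (by positivity)]
  nlinarith [mul_nonneg hd0 (sq_nonneg (u - t)), mul_nonneg (sub_nonneg.2 hd1) (sq_nonneg t)]

lemma abs_sub_le_one_of_mem_Icc {x y : ℝ} (hx : x ∈ Icc 0 1) (hy : y ∈ Icc 0 1) : |x - y| ≤ 1 :=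
  (Real.dist_eq x y).symm.trans_le (Real.dist_le_of_mem_Icc_01 hx hy)

lemma convexComb_mem_Icc {w x y c d : ℝ} (hw : w ∈ Icc 0 1) (hx : x ∈ Icc c d)
    (hy : y ∈ Icc c d) : w * x + (1 - w) * y ∈ Icc c d := by
  simpa only [smul_eq_mul] using
    convex_Icc c d hx hy hw.1 (sub_nonneg.2 hw.2) (add_sub_cancel w 1)

lemma abs_convexComb_sub_le {w w' x y x' y' c : ℝ} (hw : w ∈ Icc 0 1) (hx : |x - x'| ≤ c)
    (hy : |y - y'| ≤ c) :
    |(w * x + (1 - w) * y) - (w' * x' + (1 - w') * y')| ≤ c + |w - w'| * |x' - y'| := by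
  obtain ⟨hw0, hw1⟩ := hw
  have hw' : 0 ≤ 1 - w := sub_nonneg.2 hw1
  calc |(w * x + (1 - w) * y) - (w' * x' + (1 - w') * y')|
      = |w * (x - x') + (1 - w) * (y - y') + (w - w') * (x' - y')| := by
        congr 1; ring
    _ ≤ w * |x - x'| + (1 - w) * |y - y'| + |w - w'| * |x' - y'| := by
        refine (abs_add_le _ _).trans (add_le_add ((abs_add_le _ _).trans_eq ?_) (abs_mul _ _).le)
        rw [abs_mul, abs_mul, abs_of_nonneg hw0, abs_of_nonneg hw']
    _ ≤ w * c + (1 - w) * c + |w - w'| * |x' - y'| := by gcongr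
    _ = c + |w - w'| * |x' - y'| := by ring

namespace Filter

variable {ι : Type*} {l : Filter ι} [l.NeBot] {u v : ι → ℝ} {a b c : ℝ}

lemma limsup_le_limsup_add_of_le_add (hu : ∀ i, a ≤ u i) (hv : ∀ i, v i ∈ Icc a b)
    (huv : ∀ i, u i ≤ v i + c) : limsup u l ≤ limsup v l + c := by
  have hvb : l.IsBoundedUnder (· ≤ ·) v := isBoundedUnder_of ⟨b, fun i => (hv i).2⟩
  rw [← limsup_add_const l v c hvb (isCoboundedUnder_le_of_le l fun i => (hv i).1)]
  exact limsup_le_limsup (Eventually.of_forall huv) (isCoboundedUnder_le_of_le l hu)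
    (isBoundedUnder_of ⟨b + c, fun i => by linarith [(hv i).2]⟩)

lemma abs_limsup_sub_limsup_le (hu : ∀ i, u i ∈ Icc a b) (hv : ∀ i, v i ∈ Icc a b)
    (huv : ∀ i, |u i - v i| ≤ c) : |limsup u l - limsup v l| ≤ c := by
  rw [abs_sub_le_iff, sub_le_iff_le_add', sub_le_iff_le_add']
  constructor
  · simpa only [add_comm c] using limsup_le_limsup_add_of_le_add (fun i => (hu i).1) hv
      fun i => by linarith [(abs_le.1 (huv i)).2]
  · simpa only [add_comm c] using limsup_le_limsup_add_of_le_add (fun i => (hv i).1) hu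
      fun i => by linarith [(abs_le.1 (huv i)).1]

end Filter

section TwoStateChain

variable {m a b m' a' b' : ℕ → ℝ} {ζ η : ℝ}

def stepEntropy (m a b : ℕ → ℝ) (k : ℕ) : ℝ :=
  m k * binEntropy (a k) + (1 - m k) * binEntropy (b k)

lemma chain_mem_Icc (hm : ∀ k, m (k + 1) = m k * a k + (1 - m k) * b k) (h0 : m 0 ∈ Icc 0 1)
    (ha : ∀ k, a k ∈ Icc 0 1) (hb : ∀ k, b k ∈ Icc 0 1) (k : ℕ) : m k ∈ Icc 0 1 := by
  induction k with
  | zero => exact h0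
  | succ k ih => exact hm k ▸ convexComb_mem_Icc ih (ha k) (hb k)

lemma stepEntropy_mem_Icc {k : ℕ} (hm : m k ∈ Icc 0 1) (ha : a k ∈ Icc 0 1)
    (hb : b k ∈ Icc 0 1) : stepEntropy m a b k ∈ Icc 0 (log 2) :=
  convexComb_mem_Icc hm ⟨binEntropy_nonneg ha.1 ha.2, binEntropy_le_log_two⟩
    ⟨binEntropy_nonneg hb.1 hb.2, binEntropy_le_log_two⟩

lemma abs_stepEntropy_sub_le {k : ℕ} (hm : m (k + 1) = m k * a k + (1 - m k) * b k)
    (hm' : m' (k + 1) = m' k * a' k + (1 - m' k) * b' k)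
    (hmk : m k ∈ Icc 0 1) (hmk' : m' k ∈ Icc 0 1) (ha' : a' k ∈ Icc 0 1) (hb' : b' k ∈ Icc 0 1)
    (ha : |a k - a' k| ≤ ζ) (hb : |b k - b' k| ≤ ζ)
    (hha : |binEntropy (a k) - binEntropy (a' k)| ≤ η)
    (hhb : |binEntropy (b k) - binEntropy (b' k)| ≤ η) (hζ : 0 < ζ) :
    |stepEntropy m a b k - stepEntropy m' a' b' k| ≤
      η + 3 * √ζ + 3 / (2 * √ζ) * (|m k - m' k| - |m (k + 1) - m' (k + 1)|) := by
  set Δ := |m k - m' k|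
  set r := |a' k - b' k|
  have hΔ : Δ ≤ 1 := abs_sub_le_one_of_mem_Icc hmk hmk'
  have hr : r ≤ 1 := abs_sub_le_one_of_mem_Icc ha' hb'
  have hsq : 0 < √ζ := sqrt_pos.2 hζ
  have hcontract : Δ * (1 - r) ≤ ζ + Δ - |m (k + 1) - m' (k + 1)| := by
    have := abs_convexComb_sub_le hmk ha hb (w' := m' k)
    rw [← hm, ← hm'] at this
    linarith
  calc |stepEntropy m a b k - stepEntropy m' a' b' k|
      ≤ η + Δ * |binEntropy (a' k) - binEntropy (b' k)| := abs_convexComb_sub_le hmk hha hhb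
    _ ≤ η + 3 * (Δ * √(1 - r)) := by
        have := abs_binEntropy_sub_le ha' hb'
        have : 0 ≤ Δ := abs_nonneg _
        nlinarith
    _ ≤ η + 3 * ((Δ * (1 - r) / √ζ + √ζ) / 2) := by
        gcongr
        exact mul_sqrt_le_half_div_add (abs_nonneg _) hΔ (by linarith) hsq
    _ ≤ η + 3 * (((ζ + Δ - |m (k + 1) - m' (k + 1)|) / √ζ + √ζ) / 2) := by gcongr
    _ = η + 3 * √ζ + 3 / (2 * √ζ) * (Δ - |m (k + 1) - m' (k + 1)|) := by
        have hζ' : ζ / √ζ = √ζ := div_sqrt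
        rw [add_sub_assoc, add_div ζ, hζ']
        field_simp
        ring

lemma abs_sum_stepEntropy_sub_le (hm : ∀ k, m (k + 1) = m k * a k + (1 - m k) * b k)
    (hm' : ∀ k, m' (k + 1) = m' k * a' k + (1 - m' k) * b' k) (h0 : m 0 = m' 0)
    (hmI : ∀ k, m k ∈ Icc 0 1) (hmI' : ∀ k, m' k ∈ Icc 0 1)
    (ha' : ∀ k, a' k ∈ Icc 0 1) (hb' : ∀ k, b' k ∈ Icc 0 1)
    (ha : ∀ k, |a k - a' k| ≤ ζ) (hb : ∀ k, |b k - b' k| ≤ ζ)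
    (hha : ∀ k, |binEntropy (a k) - binEntropy (a' k)| ≤ η)
    (hhb : ∀ k, |binEntropy (b k) - binEntropy (b' k)| ≤ η) (hζ : 0 < ζ) (n : ℕ) :
    |∑ k ∈ Finset.range n, (stepEntropy m a b k - stepEntropy m' a' b' k)| ≤
      n * (η + 3 * √ζ) := by
  set Δ := fun k => |m k - m' k|
  calc |∑ k ∈ Finset.range n, (stepEntropy m a b k - stepEntropy m' a' b' k)|
      ≤ ∑ k ∈ Finset.range n, |stepEntropy m a b k - stepEntropy m' a' b' k| :=
        Finset.abs_sum_le_sum_abs _ _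
    _ ≤ ∑ k ∈ Finset.range n, (η + 3 * √ζ + 3 / (2 * √ζ) * (Δ k - Δ (k + 1))) :=
        Finset.sum_le_sum fun k _ => abs_stepEntropy_sub_le (hm k) (hm' k) (hmI k) (hmI' k) (ha' k)
          (hb' k) (ha k) (hb k) (hha k) (hhb k) hζ
    _ = n * (η + 3 * √ζ) - 3 / (2 * √ζ) * Δ n := by
        rw [Finset.sum_add_distrib, ← Finset.mul_sum, Finset.sum_range_sub']
        simp [Δ, h0]
        ring
    _ ≤ n * (η + 3 * √ζ) := sub_le_self _ (by positivity)

end TwoStateChain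

lemma Fintype.sum_fun_fin_succ {α M : Type*} [Fintype α] [AddCommMonoid M] {n : ℕ}
    (f : (Fin (n + 1) → α) → M) :
    ∑ ε, f ε = ∑ ε : Fin n → α, ∑ b, f (Fin.snoc ε b) := by
  rw [← (Fin.snocEquiv fun _ => α).sum_comp f, Fintype.sum_prod_type_right]
  rfl

lemma weight_true (pq : ℝ × ℝ) (e : Bool) : weight pq e true = 1 - weight pq e false := by
  cases e <;> simp [weight]

lemma weight_mem_Icc {pq : ℝ × ℝ} (hp : pq.1 ∈ Icc 0 1) (hq : pq.2 ∈ Icc 0 1) (e b : Bool) :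
    weight pq e b ∈ Icc 0 1 := by
  have h1 : ∀ x ∈ Icc (0 : ℝ) 1, 1 - x ∈ Icc (0 : ℝ) 1 :=
    fun x hx => ⟨sub_nonneg.2 hx.2, sub_le_self 1 hx.1⟩
  cases e <;> cases b <;> simp [weight, hp, hq, h1]

namespace Markov

variable {p q p' q' : ℕ → ℝ}

def lastLetter : {n : ℕ} → (Fin n → Bool) → Bool
  | 0, _ => false
  | _ + 1, ε => ε (Fin.last _)

/-- The empty word counts as ending in `false`, so the first letter is `false` with
probability `p 0`. -/
def cylWeight (p q : ℕ → ℝ) : (n : ℕ) → (Fin n → Bool) → ℝ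
  | 0, _ => 1
  | n + 1, ε =>
    cylWeight p q n (Fin.init ε) * weight (p n, q n) (lastLetter (Fin.init ε)) (ε (Fin.last n))

def zeroMass (p q : ℕ → ℝ) (n : ℕ) : ℝ :=
  ∑ ε : Fin n → Bool, bif lastLetter ε then 0 else cylWeight p q n ε

def entropy (p q : ℕ → ℝ) (n : ℕ) : ℝ :=
  ∑ ε : Fin n → Bool, negMulLog (cylWeight p q n ε)

def entropyRate (p q : ℕ → ℝ) (n : ℕ) : ℝ :=
  entropy p q n / (n * log 2)

lemma lastLetter_snoc {n : ℕ} (ε : Fin n → Bool) (b : Bool) :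
    lastLetter (Fin.snoc ε b : Fin (n + 1) → Bool) = b := by
  simp [lastLetter]

lemma cylWeight_snoc {n : ℕ} (ε : Fin n → Bool) (b : Bool) :
    cylWeight p q (n + 1) (Fin.snoc ε b) =
      cylWeight p q n ε * weight (p n, q n) (lastLetter ε) b := by
  simp [cylWeight]

lemma cylWeight_nonneg (hp : ∀ n, p n ∈ Icc 0 1) (hq : ∀ n, q n ∈ Icc 0 1) :
    ∀ (n : ℕ) (ε : Fin n → Bool), 0 ≤ cylWeight p q n ε
  | 0, _ => zero_le_one
  | n + 1, _ => mul_nonneg (cylWeight_nonneg hp hq n _) (weight_mem_Icc (hp n) (hq n) _ _).1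

lemma sum_cylWeight (n : ℕ) : ∑ ε : Fin n → Bool, cylWeight p q n ε = 1 := by
  induction n with
  | zero => simp [cylWeight]
  | succ n ih =>
    simp only [Fintype.sum_fun_fin_succ, Fintype.sum_bool, cylWeight_snoc, weight_true]
    simpa only [← mul_add, sub_add_cancel, mul_one] using ih

lemma sum_mul_lastLetter (n : ℕ) (g : Bool → ℝ) :
    ∑ ε : Fin n → Bool, cylWeight p q n ε * g (lastLetter ε) =
      zeroMass p q n * g false + (1 - zeroMass p q n) * g true := by
  have hsplit : ∀ ε : Fin n → Bool, cylWeight p q n ε * g (lastLetter ε) =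
      (bif lastLetter ε then 0 else cylWeight p q n ε) * g false +
        (cylWeight p q n ε - bif lastLetter ε then 0 else cylWeight p q n ε) * g true := by
    intro ε
    cases lastLetter ε <;> simp
  simp only [hsplit, Finset.sum_add_distrib, ← Finset.sum_mul, Finset.sum_sub_distrib,
    sum_cylWeight, zeroMass]

lemma zeroMass_zero : zeroMass p q 0 = 1 := by
  simp [zeroMass, lastLetter, cylWeight]

lemma zeroMass_succ (n : ℕ) :
    zeroMass p q (n + 1) = zeroMass p q n * p n + (1 - zeroMass p q n) * q n := by
  calc zeroMass p q (n + 1)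
      = ∑ ε : Fin n → Bool, cylWeight p q n ε * weight (p n, q n) (lastLetter ε) false := by
        simp [zeroMass, Fintype.sum_fun_fin_succ, lastLetter_snoc, cylWeight_snoc]
    _ = _ := sum_mul_lastLetter n fun e => weight (p n, q n) e false

lemma zeroMass_mem_Icc (hp : ∀ n, p n ∈ Icc 0 1) (hq : ∀ n, q n ∈ Icc 0 1) (n : ℕ) :
    zeroMass p q n ∈ Icc 0 1 :=
  chain_mem_Icc zeroMass_succ (by simp [zeroMass_zero]) hp hq n

lemma entropy_succ (n : ℕ) :
    entropy p q (n + 1) = entropy p q n + stepEntropy (zeroMass p q) p q n := by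
  have hstep : ∀ ε : Fin n → Bool, ∑ b, negMulLog (cylWeight p q (n + 1) (Fin.snoc ε b)) =
      negMulLog (cylWeight p q n ε) +
        cylWeight p q n ε * binEntropy (weight (p n, q n) (lastLetter ε) false) := by
    intro ε
    simp only [Fintype.sum_bool, cylWeight_snoc, weight_true, negMulLog_mul,
      binEntropy_eq_negMulLog_add_negMulLog_one_sub]
    ring
  rw [entropy, Fintype.sum_fun_fin_succ, Finset.sum_congr rfl fun ε _ => hstep ε,
    Finset.sum_add_distrib]
  exact congrArg _ (sum_mul_lastLetter n fun e => binEntropy (weight (p n, q n) e false))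

lemma entropy_eq_sum_stepEntropy (n : ℕ) :
    entropy p q n = ∑ k ∈ Finset.range n, stepEntropy (zeroMass p q) p q k := by
  induction n with
  | zero => simp [entropy, cylWeight]
  | succ n ih => rw [entropy_succ, Finset.sum_range_succ, ih]


lemma entropy_mem_Icc (hp : ∀ n, p n ∈ Icc 0 1) (hq : ∀ n, q n ∈ Icc 0 1) (n : ℕ) :
    entropy p q n ∈ Icc 0 (n * log 2) := by
  have hstep := fun k => stepEntropy_mem_Icc (zeroMass_mem_Icc hp hq k) (hp k) (hq k)
  rw [entropy_eq_sum_stepEntropy]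
  refine ⟨Finset.sum_nonneg fun k _ => (hstep k).1, ?_⟩
  simpa using Finset.sum_le_sum fun k (_ : k ∈ Finset.range n) => (hstep k).2

lemma entropyRate_mem_Icc (hp : ∀ n, p n ∈ Icc 0 1) (hq : ∀ n, q n ∈ Icc 0 1) (n : ℕ) :
    entropyRate p q n ∈ Icc 0 1 := by
  have hE := entropy_mem_Icc hp hq n
  rcases n.eq_zero_or_pos with rfl | hn
  · simp [entropyRate]
  have : 0 < n * log 2 := by positivity
  exact ⟨div_nonneg hE.1 this.le, div_le_one_of_le₀ hE.2 this.le⟩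

lemma abs_entropy_sub_le {ζ η : ℝ} (hp : ∀ n, p n ∈ Icc 0 1) (hq : ∀ n, q n ∈ Icc 0 1)
    (hp' : ∀ n, p' n ∈ Icc 0 1) (hq' : ∀ n, q' n ∈ Icc 0 1)
    (hpp : ∀ n, |p n - p' n| ≤ ζ) (hqq : ∀ n, |q n - q' n| ≤ ζ)
    (hhp : ∀ n, |binEntropy (p n) - binEntropy (p' n)| ≤ η)
    (hhq : ∀ n, |binEntropy (q n) - binEntropy (q' n)| ≤ η) (hζ : 0 < ζ) (n : ℕ) :
    |entropy p q n - entropy p' q' n| ≤ n * (η + 3 * √ζ) := by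
  rw [entropy_eq_sum_stepEntropy, entropy_eq_sum_stepEntropy, ← Finset.sum_sub_distrib]
  exact abs_sum_stepEntropy_sub_le zeroMass_succ zeroMass_succ
    (by rw [zeroMass_zero, zeroMass_zero]) (zeroMass_mem_Icc hp hq) (zeroMass_mem_Icc hp' hq')
    hp' hq' hpp hqq hhp hhq hζ n

lemma exists_forall_abs_entropyRate_sub_le {ε : ℝ} (hε : 0 < ε) :
    ∃ ζ > 0, ∀ p q p' q' : ℕ → ℝ, (∀ n, p n ∈ Icc 0 1) → (∀ n, q n ∈ Icc 0 1) →
      (∀ n, p' n ∈ Icc 0 1) → (∀ n, q' n ∈ Icc 0 1) →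
      (∀ n, |p n - p' n| ≤ ζ) → (∀ n, |q n - q' n| ≤ ζ) →
      ∀ n, |entropyRate p q n - entropyRate p' q' n| ≤ ε := by
  have hlog : 0 < log 2 := log_pos one_lt_two
  obtain ⟨δ, hδ, hmod⟩ := Metric.uniformContinuousOn_iff_le.1
    (isCompact_Icc.uniformContinuousOn_of_continuous binEntropy_continuous.continuousOn)
    (ε * log 2 / 2) (by positivity)
  simp only [Real.dist_eq] at hmod
  set ζ := min δ ((ε * log 2 / 6) ^ 2)
  have hζ : 0 < ζ := by positivity
  have hsqrt : √ζ ≤ ε * log 2 / 6 :=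
    (sqrt_le_sqrt (min_le_right _ _)).trans_eq (sqrt_sq (by positivity))
  refine ⟨ζ, hζ, fun p q p' q' hp hq hp' hq' hpp hqq n => ?_⟩
  have hE := abs_entropy_sub_le hp hq hp' hq' hpp hqq
    (fun n => hmod _ (hp n) _ (hp' n) ((hpp n).trans (min_le_left _ _)))
    (fun n => hmod _ (hq n) _ (hq' n) ((hqq n).trans (min_le_left _ _))) hζ n
  rcases n.eq_zero_or_pos with rfl | hn
  · simp [entropyRate, hε.le]
  have hnlog : 0 < n * log 2 := by positivity
  rw [entropyRate, entropyRate, ← sub_div, abs_div, abs_of_pos hnlog, div_le_iff₀ hnlog]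
  calc |entropy p q n - entropy p' q' n| ≤ n * (ε * log 2 / 2 + 3 * √ζ) := hE
    _ ≤ n * (ε * log 2 / 2 + 3 * (ε * log 2 / 6)) := by gcongr
    _ = ε * (n * log 2) := by ring

end Markov

namespace MarkovMeasure

variable {μ : Measure K} {p q : ℕ → ℝ}

lemma measure_cyl [IsProbabilityMeasure μ] (hM : MarkovMeasure μ p q)
    (hp : ∀ n, p n ∈ Icc 0 1) (hq : ∀ n, q n ∈ Icc 0 1) :
    ∀ {n : ℕ} (ε : Fin n → Bool), μ (cyl ε) = ENNReal.ofReal (Markov.cylWeight p q n ε)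
  | 0, ε => by simp [cyl, Markov.cylWeight]
  | 1, ε => by
    obtain ⟨b, rfl⟩ : ∃ b, ε = ![b] := ⟨ε 0, by ext i; fin_cases i; rfl⟩
    cases b
    · simpa [Markov.cylWeight, Markov.lastLetter, weight] using hM.1
    · simpa [Markov.cylWeight, Markov.lastLetter, weight] using hM.2.1
  | n + 2, ε => by
    rw [← Fin.snoc_init_self ε, hM.2.2 n, measure_cyl hM hp hq, Markov.cylWeight_snoc,
      ENNReal.ofReal_mul (Markov.cylWeight_nonneg hp hq _ _)]
    rfl

lemma entropySum_eq [IsProbabilityMeasure μ] (hM : MarkovMeasure μ p q)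
    (hp : ∀ n, p n ∈ Icc 0 1) (hq : ∀ n, q n ∈ Icc 0 1) (n : ℕ) :
    entropySum μ n = -Markov.entropy p q n := by
  rw [Markov.entropy, ← Finset.sum_neg_distrib]
  refine Finset.sum_congr rfl fun ε _ => ?_
  rw [hM.measure_cyl hp hq, ENNReal.toReal_ofReal (Markov.cylWeight_nonneg hp hq n ε), negMulLog,
    neg_mul, neg_neg]

lemma hUpp_eq [IsProbabilityMeasure μ] (hM : MarkovMeasure μ p q)
    (hp : ∀ n, p n ∈ Icc 0 1) (hq : ∀ n, q n ∈ Icc 0 1) :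
    hUpp μ = limsup (Markov.entropyRate p q) atTop := by
  unfold hUpp
  congr 1
  funext n
  rw [hM.entropySum_eq hp hq, Markov.entropyRate]
  ring

end MarkovMeasure

/-- **Theorem 2 (packing/entropy part).** The upper entropy (equivalently, by the main
theorem, the lower packing dimension) of a non-homogeneous Markov measure is a continuous
function of the weight sequences for the `ℓ^∞` norm: for every `ε > 0` there is `ζ > 0`
such that whenever `μ, μ'` satisfy (M) with weights `(pₙ, qₙ)`, `(p'ₙ, q'ₙ) ⊆ (0,1)` and
`sup_n max(|pₙ - p'ₙ|, |qₙ - q'ₙ|) < ζ`, one has `|h^*(μ) - h^*(μ')| < ε`. -/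
theorem markov_upper_entropy_continuous :
    ∀ ε > (0 : ℝ), ∃ ζ > (0 : ℝ),
      ∀ (μ μ' : Measure K), IsProbabilityMeasure μ → IsProbabilityMeasure μ' →
        ∀ (p q p' q' : ℕ → ℝ),
          (∀ n, p n ∈ Set.Ioo (0 : ℝ) 1) → (∀ n, q n ∈ Set.Ioo (0 : ℝ) 1) →
          (∀ n, p' n ∈ Set.Ioo (0 : ℝ) 1) → (∀ n, q' n ∈ Set.Ioo (0 : ℝ) 1) →
          MarkovMeasure μ p q → MarkovMeasure μ' p' q' →
          (⨆ n : ℕ, max |p n - p' n| |q n - q' n|) < ζ →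
          |hUpp μ - hUpp μ'| < ε := by
  intro ε hε
  obtain ⟨ζ, hζ, hrate⟩ := Markov.exists_forall_abs_entropyRate_sub_le (half_pos hε)
  refine ⟨ζ, hζ, fun μ μ' _ _ p q p' q' hp hq hp' hq' hμ hμ' hsup => ?_⟩
  replace hp n := Ioo_subset_Icc_self (hp n)
  replace hq n := Ioo_subset_Icc_self (hq n)
  replace hp' n := Ioo_subset_Icc_self (hp' n)
  replace hq' n := Ioo_subset_Icc_self (hq' n)
  have hbdd : BddAbove (range fun n => max |p n - p' n| |q n - q' n|) := by
    refine ⟨1, ?_⟩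
    rintro _ ⟨n, rfl⟩
    exact max_le (abs_sub_le_one_of_mem_Icc (hp n) (hp' n))
      (abs_sub_le_one_of_mem_Icc (hq n) (hq' n))
  have hclose n : max |p n - p' n| |q n - q' n| ≤ ζ := ((le_ciSup hbdd n).trans_lt hsup).le
  rw [hμ.hUpp_eq hp hq, hμ'.hUpp_eq hp' hq']
  calc _ ≤ ε / 2 := abs_limsup_sub_limsup_le (Markov.entropyRate_mem_Icc hp hq)
        (Markov.entropyRate_mem_Icc hp' hq') (hrate p q p' q' hp hq hp' hq'
          (fun n => (le_max_left _ _).trans (hclose n))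
          (fun n => (le_max_right _ _).trans (hclose n)))
    _ < ε := half_lt_self hε
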